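/- For every x > 0, the exponential integral satisfies the two-sided bound (1/2)·log(1 + 2/x) < e^x · E1(x) < log(1 + 1/x), where E1(x) = ∫_x^∞ e^{-y}/y dy. -/

import Mathlib

open MeasureTheory Real
open Set Filter Topology

/-! Both bounds compare `E1` with `b(y) = e^{-y} log (1 + c / y)` through derivatives. Since
`E1' = -e^{-y}/y`, the differences `E1 - b` (for `c = 1`) and `b / 2 - E1` (for `c = 2`) have
derivatives `e^{-y}` times `log (1 + 1/y) - 1/(y+1)`, resp. `(y+1)/(y(y+2)) - log (1 + 2/y) / 2`,
which are positive by `1 - t⁻¹ < log t` and `log v < sinh (log v)`. An increasing function tending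
to `0` at infinity is negative. -/

noncomputable def E1 (x : ℝ) : ℝ := ∫ y in Set.Ioi x, Real.exp (-y) / y

lemma integrableOn_exp_neg_div_Ioi {x : ℝ} (hx : 0 < x) :
    IntegrableOn (fun y => exp (-y) / y) (Ioi x) := by
  have hdom : IntegrableOn (fun y => exp (-y) / x) (Ioi x) :=
    (integrableOn_exp_neg_Ioi x).div_const x
  refine hdom.mono' ?_ ?_
  · exact ((continuous_exp.comp continuous_neg).continuousOn.div continuousOn_id
      fun y hy => (hx.trans hy).ne').aestronglyMeasurable measurableSet_Ioi
  · filter_upwards [ae_restrict_mem measurableSet_Ioi] with y hy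
    rw [norm_of_nonneg (div_nonneg (exp_pos _).le (hx.trans hy).le)]
    exact div_le_div_of_nonneg_left (exp_pos _).le hx hy.le

lemma E1_nonneg {x : ℝ} (hx : 0 ≤ x) : 0 ≤ E1 x :=
  setIntegral_nonneg measurableSet_Ioi fun _ hy =>
    div_nonneg (exp_pos _).le (hx.trans_lt hy).le

lemma E1_le_exp_neg_div {x : ℝ} (hx : 0 < x) : E1 x ≤ exp (-x) / x := calc
  E1 x ≤ ∫ y in Ioi x, exp (-y) / x :=
        setIntegral_mono_on (integrableOn_exp_neg_div_Ioi hx)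
          ((integrableOn_exp_neg_Ioi x).div_const x) measurableSet_Ioi
          fun y hy => div_le_div_of_nonneg_left (exp_pos _).le hx (le_of_lt hy)
  _ = exp (-x) / x := by rw [integral_div, integral_exp_neg_Ioi]

lemma tendsto_E1_atTop : Tendsto E1 atTop (𝓝 0) := by
  have hbound : Tendsto (fun x => exp (-x) / x) atTop (𝓝 0) := by
    simpa [div_eq_mul_inv] using tendsto_exp_neg_atTop_nhds_zero.mul tendsto_inv_atTop_zero
  refine squeeze_zero' ?_ ?_ hbound
  · filter_upwards [eventually_ge_atTop 0] with x hx using E1_nonneg hx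
  · filter_upwards [eventually_gt_atTop 0] with x hx using E1_le_exp_neg_div hx

lemma E1_eq_intervalIntegral_add {a b : ℝ} (ha : 0 < a) (hab : a ≤ b) :
    E1 a = (∫ y in a..b, exp (-y) / y) + E1 b := by
  rw [intervalIntegral.integral_of_le hab, E1, E1, ← Ioc_union_Ioi_eq_Ioi hab,
    setIntegral_union (Ioc_disjoint_Ioi le_rfl) measurableSet_Ioi
      ((integrableOn_exp_neg_div_Ioi ha).mono_set Ioc_subset_Ioi_self)
      (integrableOn_exp_neg_div_Ioi (ha.trans_le hab))]

lemma hasDerivAt_E1 {x : ℝ} (hx : 0 < x) : HasDerivAt E1 (-(exp (-x) / x)) x := by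
  have hcont : Continuous fun y : ℝ => exp (-y) := continuous_exp.comp continuous_neg
  have hFTC : HasDerivAt (fun u => E1 x - ∫ y in x..u, exp (-y) / y) (-(exp (-x) / x)) x :=
    (intervalIntegral.integral_hasDerivAt_right IntervalIntegrable.refl
      (hcont.measurable.div measurable_id).stronglyMeasurable.stronglyMeasurableAtFilter
      (hcont.continuousAt.div continuousAt_id hx.ne')).const_sub (E1 x)
  refine hFTC.congr_of_eventuallyEq ?_
  filter_upwards [eventually_gt_nhds hx] with y hy
  rcases le_total x y with hxy | hyx
  · linarith [E1_eq_intervalIntegral_add hx hxy]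
  · linarith [E1_eq_intervalIntegral_add hy hyx,
      intervalIntegral.integral_symm (μ := volume) (f := fun y => exp (-y) / y) x y]

lemma hasDerivAt_exp_neg_mul_log_one_add_div {c y : ℝ} (hc : 0 ≤ c) (hy : 0 < y) :
    HasDerivAt (fun y => exp (-y) * log (1 + c / y))
      (-(exp (-y) * (log (1 + c / y) + c / (y * (y + c))))) y := by
  have hinner : HasDerivAt (fun y => 1 + c / y) (-(c / y ^ 2)) y := by
    simpa [div_eq_mul_inv] using ((hasDerivAt_inv hy.ne').const_mul c).const_add 1
  have hlog := hinner.log (by positivity)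
  have hexp : HasDerivAt (fun y => exp (-y)) (-exp (-y)) y := by
    simpa using (hasDerivAt_neg y).exp
  refine (hexp.mul hlog).congr_deriv ?_
  have : y + c ≠ 0 := by positivity
  field_simp
  ring

lemma tendsto_exp_neg_mul_log_one_add_div (c : ℝ) :
    Tendsto (fun y => exp (-y) * log (1 + c / y)) atTop (𝓝 0) := by
  have hlog : Tendsto (fun y => log (1 + c / y)) atTop (𝓝 0) := by
    have h : Tendsto (fun y => 1 + c / y) atTop (𝓝 1) := by
      simpa using ((tendsto_const_nhds (x := c)).div_atTop tendsto_id).const_add 1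
    simpa [Function.comp_def] using (continuousAt_log one_ne_zero).tendsto.comp h
  simpa using tendsto_exp_neg_atTop_nhds_zero.mul hlog

lemma lt_of_hasDerivAt_pos_of_tendsto {φ φ' : ℝ → ℝ} {x l : ℝ}
    (hd : ∀ y, x ≤ y → HasDerivAt φ (φ' y) y) (hpos : ∀ y, x < y → 0 < φ' y)
    (hlim : Tendsto φ atTop (𝓝 l)) : φ x < l := by
  have hmono : StrictMonoOn φ (Ici x) := by
    refine strictMonoOn_of_deriv_pos (convex_Ici x)
      (fun y hy => (hd y hy).continuousAt.continuousWithinAt) fun y hy => ?_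
    rw [interior_Ici] at hy
    rw [(hd y hy.le).deriv]
    exact hpos y hy
  have hle : φ (x + 1) ≤ l := ge_of_tendsto hlim <| by
    filter_upwards [eventually_ge_atTop (x + 1)] with y hy
    exact hmono.monotoneOn (by simp) (by simp; linarith) hy
  exact (hmono self_mem_Ici (by simp) (lt_add_one x)).trans_le hle

lemma one_sub_inv_lt_log {t : ℝ} (ht : 0 < t) (ht1 : t ≠ 1) : 1 - t⁻¹ < log t := by
  have := log_lt_sub_one_of_pos (inv_pos.mpr ht) (inv_ne_one.mpr ht1)
  rw [log_inv] at this
  linarith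

lemma log_lt_half_sub_inv {v : ℝ} (hv : 1 < v) : log v < (v - v⁻¹) / 2 := by
  have h := self_lt_sinh_iff.mpr (log_pos hv)
  rwa [sinh_eq, exp_log (by linarith), exp_neg, exp_log (by linarith)] at h

lemma one_div_add_one_lt_log_one_add_one_div {y : ℝ} (hy : 0 < y) :
    1 / (y + 1) < log (1 + 1 / y) := by
  have h := one_sub_inv_lt_log (t := 1 + 1 / y) (by positivity) (by simp [hy.ne'])
  convert h using 1
  field_simp
  ring

lemma half_log_one_add_two_div_lt {y : ℝ} (hy : 0 < y) :
    1 / 2 * log (1 + 2 / y) < (y + 1) / (y * (y + 2)) := by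
  have h := log_lt_half_sub_inv (v := 1 + 2 / y) (by simp; positivity)
  have hid : (1 + 2 / y - (1 + 2 / y)⁻¹) / 2 = 2 * ((y + 1) / (y * (y + 2))) := by
    field_simp
    ring
  linarith

lemma E1_lt_exp_neg_mul_log {x : ℝ} (hx : 0 < x) : E1 x < exp (-x) * log (1 + 1 / x) := by
  suffices E1 x - exp (-x) * log (1 + 1 / x) < 0 by linarith
  refine lt_of_hasDerivAt_pos_of_tendsto (φ := fun y => E1 y - exp (-y) * log (1 + 1 / y))
    (φ' := fun y => exp (-y) * (log (1 + 1 / y) - 1 / (y + 1))) (fun y hxy => ?_)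
    (fun y hxy => mul_pos (exp_pos _)
      (sub_pos.mpr (one_div_add_one_lt_log_one_add_one_div (hx.trans hxy))))
    (by simpa using tendsto_E1_atTop.sub (tendsto_exp_neg_mul_log_one_add_div 1))
  have hy := hx.trans_le hxy
  refine ((hasDerivAt_E1 hy).sub
    (hasDerivAt_exp_neg_mul_log_one_add_div zero_le_one hy)).congr_deriv ?_
  have : y + 1 ≠ 0 := by positivity
  field_simp
  ring

lemma half_exp_neg_mul_log_lt_E1 {x : ℝ} (hx : 0 < x) :
    1 / 2 * (exp (-x) * log (1 + 2 / x)) < E1 x := by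
  suffices 1 / 2 * (exp (-x) * log (1 + 2 / x)) - E1 x < 0 by linarith
  refine lt_of_hasDerivAt_pos_of_tendsto
    (φ := fun y => 1 / 2 * (exp (-y) * log (1 + 2 / y)) - E1 y)
    (φ' := fun y => exp (-y) * ((y + 1) / (y * (y + 2)) - 1 / 2 * log (1 + 2 / y)))
    (fun y hxy => ?_)
    (fun y hxy => mul_pos (exp_pos _) (sub_pos.mpr (half_log_one_add_two_div_lt (hx.trans hxy))))
    (by simpa using ((tendsto_exp_neg_mul_log_one_add_div 2).const_mul _).sub tendsto_E1_atTop)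
  have hy := hx.trans_le hxy
  refine (((hasDerivAt_exp_neg_mul_log_one_add_div zero_le_two hy).const_mul (1 / 2 : ℝ)).sub
    (hasDerivAt_E1 hy)).congr_deriv ?_
  have : y + 2 ≠ 0 := by positivity
  field_simp
  ring

theorem e1_two_sided_bound (x : ℝ) (hx : 0 < x) :
    (1 / 2) * Real.log (1 + 2 / x) < Real.exp x * E1 x ∧
    Real.exp x * E1 x < Real.log (1 + 1 / x) := by
  have hcancel (a : ℝ) : exp x * (exp (-x) * a) = a := by
    rw [← mul_assoc, ← exp_add, add_neg_cancel, exp_zero, one_mul]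
  constructor
  · have h := mul_lt_mul_of_pos_left (half_exp_neg_mul_log_lt_E1 hx) (exp_pos x)
    rwa [mul_left_comm, hcancel] at h
  · have h := mul_lt_mul_of_pos_left (E1_lt_exp_neg_mul_log hx) (exp_pos x)
    rwa [hcancel] at h
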